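/- (Lemma 11) Suppose z(B) ≥ 0 for every odd set B, yz(e) ≥ w(e) for every edge e (domination), and M' is a perfect matching of G with Σ_{v∈V} y(v) + Σ_B z(B)·⌊|B|/2⌋ ≤ w(M') + 8n (the dual objective is at most w(M') + 8n). Then for every (not necessarily perfect) matching M'' of G, w(M'') ≤ w(M') + 8n − Σ_{u not matched by M''} y(u). -/

import Mathlib

open Finset
open scoped Classical

/-- `yz(e)` for an edge `e = {u,v}`: `y u + y v + ∑_{B ⊇ {u,v}} z B`. -/
noncomputable def yzE {V : Type*} [Fintype V] (y : V → ℤ) (z : Finset V → ℤ) : Sym2 V → ℤ :=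
  Sym2.lift ⟨fun u v => y u + y v + ∑ B ∈ Finset.univ.filter (fun B : Finset V => u ∈ B ∧ v ∈ B), z B,
    fun u v => by
      dsimp only
      rw [add_comm (y u) (y v)]
      congr 1
      apply Finset.sum_congr _ (fun _ _ => rfl)
      ext B
      simp [and_comm]⟩

/-- `M` is a matching of `G`: a set of edges of `G`, pairwise vertex-disjoint. -/
def IsMatchingF {V : Type*} (G : SimpleGraph V) (M : Finset (Sym2 V)) : Prop :=
  (∀ e ∈ M, e ∈ G.edgeSet) ∧ ∀ e ∈ M, ∀ f ∈ M, e ≠ f → ∀ v : V, v ∈ e → v ∉ f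

/-- A matching is perfect if every vertex is covered. -/
def IsPerfectF {V : Type*} (M : Finset (Sym2 V)) : Prop := ∀ v : V, ∃ e ∈ M, v ∈ e

/-- A vertex is free (unmatched) if it lies on no edge of `M`. -/
def isFreeV {V : Type*} (M : Finset (Sym2 V)) (v : V) : Prop := ∀ e ∈ M, v ∉ e

/-- The edges of `M` with both endpoints in `B` (i.e. `M ∩ E(B)`). -/
noncomputable def edgesWithin {V : Type*} (M : Finset (Sym2 V)) (B : Finset V) : Finset (Sym2 V) :=
  M.filter (fun e => ∀ v ∈ e, v ∈ B)

/-- The dual objective `yz(V) = ∑ y(v) + ∑_B z(B)·⌊|B|/2⌋`. -/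
noncomputable def dualObj {V : Type*} [Fintype V] (y : V → ℤ) (z : Finset V → ℤ) : ℤ :=
  (∑ v, y v) + ∑ B : Finset V, z B * ((B.card / 2 : ℕ) : ℤ)


/-!
Weak duality. Summing domination over the edges of a matching `M` counts `y` once on every
matched vertex, and counts `z B` once for every edge of `M` inside `B`, which happens at most
`⌊|B|/2⌋` times. Hence `w(M) ≤ yz(V) − ∑_{u free} y(u)`, and `yz(V) ≤ w(M') + 8n`.
-/

namespace IsMatchingF

variable {V : Type*} {G : SimpleGraph V} {M : Finset (Sym2 V)}

lemma not_isDiag (hM : IsMatchingF G M) {e : Sym2 V} (he : e ∈ M) : ¬ e.IsDiag :=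
  G.not_isDiag_of_mem_edgeSet (hM.1 e he)

lemma pairwiseDisjoint_toFinset (hM : IsMatchingF G M) :
    (M : Set (Sym2 V)).PairwiseDisjoint Sym2.toFinset := by
  intro e he f hf hef
  rw [Function.onFun, Finset.disjoint_left]
  intro x hxe hxf
  exact hM.2 e he f hf hef x (Sym2.mem_toFinset.1 hxe) (Sym2.mem_toFinset.1 hxf)

lemma card_edgesWithin_le (hM : IsMatchingF G M) (B : Finset V) :
    #(edgesWithin M B) ≤ #B / 2 := by
  have hsub : edgesWithin M B ⊆ M := filter_subset _ _
  rw [Nat.le_div_iff_mul_le two_pos]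
  calc #(edgesWithin M B) * 2 = ∑ e ∈ edgesWithin M B, #e.toFinset := by
        rw [sum_const_nat]
        exact fun e he => Sym2.card_toFinset_of_not_isDiag e (hM.not_isDiag (hsub he))
    _ = #((edgesWithin M B).biUnion Sym2.toFinset) :=
        (card_biUnion (hM.pairwiseDisjoint_toFinset.subset (by exact_mod_cast hsub))).symm
    _ ≤ #B := card_le_card <| biUnion_subset.2 fun e he x hx =>
        (mem_filter.1 he).2 x (Sym2.mem_toFinset.1 hx)

lemma sum_sum_toFinset [Fintype V] {β : Type*} [AddCommGroup β] (hM : IsMatchingF G M)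
    (y : V → β) :
    ∑ e ∈ M, ∑ x ∈ e.toFinset, y x = ∑ v, y v - ∑ u ∈ univ.filter (isFreeV M), y u := by
  have hmatched : M.biUnion Sym2.toFinset = univ.filter (fun u => ¬ isFreeV M u) := by
    ext x
    simp [isFreeV, Sym2.mem_toFinset]
  rw [← sum_biUnion hM.pairwiseDisjoint_toFinset, hmatched, eq_sub_iff_add_eq,
    sum_filter_not_add_sum_filter]

end IsMatchingF

section

variable {V : Type*} [Fintype V] (y : V → ℤ) (z : Finset V → ℤ)

lemma yzE_eq_of_not_isDiag {e : Sym2 V} (he : ¬ e.IsDiag) :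
    yzE y z e = ∑ x ∈ e.toFinset, y x + ∑ B with ∀ x ∈ e, x ∈ B, z B := by
  induction e using Sym2.ind with
  | _ u v =>
    have huv : u ≠ v := he
    simp [yzE, Sym2.toFinset_mk_eq, sum_pair huv]

lemma IsMatchingF.sum_yzE {G : SimpleGraph V} {M : Finset (Sym2 V)} (hM : IsMatchingF G M) :
    ∑ e ∈ M, yzE y z e =
      ∑ e ∈ M, ∑ x ∈ e.toFinset, y x + ∑ B, (#(edgesWithin M B) : ℤ) * z B := by
  rw [sum_congr rfl fun e he => yzE_eq_of_not_isDiag y z (hM.not_isDiag he), sum_add_distrib]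
  congr 1
  simp only [sum_filter]
  rw [sum_comm]
  refine sum_congr rfl fun B _ => ?_
  rw [← sum_filter, sum_const, nsmul_eq_mul, edgesWithin]
  congr! -- the two filters differ only in their decidability instances

variable {y z}

theorem IsMatchingF.sum_le_dualObj_sub_sum_free {G : SimpleGraph V} {w : Sym2 V → ℤ}
    (hdom : ∀ e ∈ G.edgeSet, w e ≤ yzE y z e) (hz : ∀ B, 0 ≤ z B)
    {M : Finset (Sym2 V)} (hM : IsMatchingF G M) :
    ∑ e ∈ M, w e ≤ dualObj y z - ∑ u ∈ univ.filter (isFreeV M), y u := by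
  calc ∑ e ∈ M, w e ≤ ∑ e ∈ M, yzE y z e := sum_le_sum fun e he => hdom e (hM.1 e he)
    _ = ∑ v, y v - ∑ u ∈ univ.filter (isFreeV M), y u
          + ∑ B, (#(edgesWithin M B) : ℤ) * z B := by
        rw [hM.sum_yzE, hM.sum_sum_toFinset]
    _ ≤ ∑ v, y v - ∑ u ∈ univ.filter (isFreeV M), y u
          + ∑ B : Finset V, z B * ((#B / 2 : ℕ) : ℤ) := by
        refine add_le_add_right (sum_le_sum fun B _ => ?_) _
        rw [mul_comm]
        exact mul_le_mul_of_nonneg_left (by exact_mod_cast hM.card_edgesWithin_le B) (hz B)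
    _ = dualObj y z - ∑ u ∈ univ.filter (isFreeV M), y u := by
        rw [dualObj]
        ring

end

theorem matching_bound_from_dual_general {V : Type*} [Fintype V] (G : SimpleGraph V)
    (w : Sym2 V → ℤ) (y : V → ℤ) (z : Finset V → ℤ) (n : ℤ)
    (hsupp : ∀ B : Finset V, z B ≠ 0 → Odd B.card ∧ 3 ≤ B.card)
    (hz : ∀ B : Finset V, Odd B.card → 0 ≤ z B)
    (hdom : ∀ e ∈ G.edgeSet, w e ≤ yzE y z e)
    (M' : Finset (Sym2 V))
    (hdual : dualObj y z ≤ (∑ e ∈ M', w e) + 8 * n) :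
    ∀ M'' : Finset (Sym2 V), IsMatchingF G M'' →
      ∑ e ∈ M'', w e ≤ (∑ e ∈ M', w e) + 8 * n
        - ∑ u ∈ Finset.univ.filter (fun u => isFreeV M'' u), y u := by
  intro M'' hM''
  have hz_nonneg : ∀ B, 0 ≤ z B := fun B =>
    if h : z B = 0 then h.ge else hz B (hsupp B h).1
  linarith [hM''.sum_le_dualObj_sub_sum_free hdom hz_nonneg]

/-- Lemma 11: under nonnegativity and domination, if `M'` is a perfect
matching whose weight is within `8n` of the dual objective, then every matching `M''`
satisfies `w(M'') ≤ w(M') + 8n - ∑_{u free in M''} y(u)`. -/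
theorem matching_bound_from_dual {V : Type*} [Fintype V] (G : SimpleGraph V)
    (w : Sym2 V → ℤ) (y : V → ℤ) (z : Finset V → ℤ) (n : ℤ)
    (hsupp : ∀ B : Finset V, z B ≠ 0 → Odd B.card ∧ 3 ≤ B.card)
    (hz : ∀ B : Finset V, Odd B.card → 0 ≤ z B)
    (hdom : ∀ e ∈ G.edgeSet, w e ≤ yzE y z e)
    (M' : Finset (Sym2 V)) (hM' : IsMatchingF G M') (hM'p : IsPerfectF M')
    (hdual : dualObj y z ≤ (∑ e ∈ M', w e) + 8 * n) :
    ∀ M'' : Finset (Sym2 V), IsMatchingF G M'' →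
      ∑ e ∈ M'', w e ≤ (∑ e ∈ M', w e) + 8 * n
        - ∑ u ∈ Finset.univ.filter (fun u => isFreeV M'' u), y u :=
  matching_bound_from_dual_general G w y z n hsupp hz hdom M' hdual
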